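/- (Second-order identity for circular-symmetric functions). Let f : ℂⁿ → ℝ be a smooth circular-symmetric function. Then 𝕃²f = 𝕃̄²f = 𝕃̄(𝕃f) pointwise on ℂⁿ. -/

import Mathlib

open MeasureTheory Complex Real Filter

noncomputable section

/-- Borel measurable structure on `ℂⁿ`. -/
instance (priority := 900) {n : ℕ} : MeasurableSpace (EuclideanSpace ℂ (Fin n)) :=
  MeasurableSpace.comap WithLp.ofLp MeasurableSpace.pi

instance (priority := 900) {n : ℕ} : BorelSpace (EuclideanSpace ℂ (Fin n)) :=
  PiLp.borelSpace 2

/-- Lebesgue measure on `ℂⁿ ≅ ℝ^{2n}`. -/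
instance (priority := 900) {n : ℕ} : MeasureSpace (EuclideanSpace ℂ (Fin n)) :=
  ⟨(Measure.pi fun _ => volume).map (WithLp.toLp 2)⟩

variable {n : ℕ}

/-- Partial derivative in the `x_j` direction (ℂ-valued functions). -/
def dx (j : Fin n) (f : EuclideanSpace ℂ (Fin n) → ℂ) (z : EuclideanSpace ℂ (Fin n)) : ℂ :=
  fderiv ℝ f z (EuclideanSpace.single j 1)

/-- Partial derivative in the `y_j` direction (ℂ-valued functions). -/
def dy (j : Fin n) (f : EuclideanSpace ℂ (Fin n) → ℂ) (z : EuclideanSpace ℂ (Fin n)) : ℂ :=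
  fderiv ℝ f z (EuclideanSpace.single j Complex.I)

/-- Wirtinger derivative `∂_{z_j} = (1/2)(∂_{x_j} - i ∂_{y_j})`. -/
def dz (j : Fin n) (f : EuclideanSpace ℂ (Fin n) → ℂ) :
    EuclideanSpace ℂ (Fin n) → ℂ :=
  fun z => (1 / 2 : ℂ) * (dx j f z - Complex.I * dy j f z)

/-- Wirtinger derivative `∂_{z̄_j} = (1/2)(∂_{x_j} + i ∂_{y_j})`. -/
def dzbar (j : Fin n) (f : EuclideanSpace ℂ (Fin n) → ℂ) :
    EuclideanSpace ℂ (Fin n) → ℂ :=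
  fun z => (1 / 2 : ℂ) * (dx j f z + Complex.I * dy j f z)

/-- The complex Ornstein–Uhlenbeck operator `𝕃 = Σ_j (∂²_{z_j z̄_j} - z̄_j ∂_{z̄_j})`. -/
def OUc (f : EuclideanSpace ℂ (Fin n) → ℂ) (z : EuclideanSpace ℂ (Fin n)) : ℂ :=
  ∑ j, (dz j (dzbar j f) z - (starRingEnd ℂ) (z j) * dzbar j f z)

/-- The conjugate complex Ornstein–Uhlenbeck operator `𝕃̄ = Σ_j (∂²_{z_j z̄_j} - z_j ∂_{z_j})`. -/
def OUcBar (f : EuclideanSpace ℂ (Fin n) → ℂ) (z : EuclideanSpace ℂ (Fin n)) : ℂ :=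
  ∑ j, (dz j (dzbar j f) z - (z j) * dz j f z)

/-- Partial derivative in the `x_j` direction (ℝ-valued functions). -/
def dxR (j : Fin n) (f : EuclideanSpace ℂ (Fin n) → ℝ) (z : EuclideanSpace ℂ (Fin n)) : ℝ :=
  fderiv ℝ f z (EuclideanSpace.single j 1)

/-- Partial derivative in the `y_j` direction (ℝ-valued functions). -/
def dyR (j : Fin n) (f : EuclideanSpace ℂ (Fin n) → ℝ) (z : EuclideanSpace ℂ (Fin n)) : ℝ :=
  fderiv ℝ f z (EuclideanSpace.single j Complex.I)

/-- The real Ornstein–Uhlenbeck operator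
`L f = (1/4) Δ f - (1/2) Σ_j (x_j ∂_{x_j} f + y_j ∂_{y_j} f)` on ℝ-valued functions,
where `Δ = Σ_j (∂²_{x_j x_j} + ∂²_{y_j y_j})` is the Laplacian on `ℂⁿ ≅ ℝ^{2n}`. -/
def OUr (f : EuclideanSpace ℂ (Fin n) → ℝ) (z : EuclideanSpace ℂ (Fin n)) : ℝ :=
  ∑ j, ((1 / 4 : ℝ) * (dxR j (dxR j f) z + dyR j (dyR j f) z)
    - (1 / 2 : ℝ) * ((z j).re * dxR j f z + (z j).im * dyR j f z))

/-- The real Ornstein–Uhlenbeck operator acting on ℂ-valued functions. -/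
def OUrC (f : EuclideanSpace ℂ (Fin n) → ℂ) (z : EuclideanSpace ℂ (Fin n)) : ℂ :=
  ∑ j, ((1 / 4 : ℂ) * (dx j (dx j f) z + dy j (dy j f) z)
    - (1 / 2 : ℂ) * (((z j).re : ℂ) * dx j f z + ((z j).im : ℂ) * dy j f z))

/-- Second-order Wirtinger derivative `∂²_{z_j z̄_k}` of a real-valued function
(viewed as complex-valued). -/
def d2 (j k : Fin n) (f : EuclideanSpace ℂ (Fin n) → ℝ) :
    EuclideanSpace ℂ (Fin n) → ℂ :=
  dz j (dzbar k (fun z => (f z : ℂ)))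

/-- A real-valued function on ℂⁿ is plurisubharmonic if for all `z, w` the Hermitian
form `Σ_{j,k} ∂²_{z_j z̄_k} f(z) · w_j · conj(w_k)` is a nonnegative real number. -/
def Psh (f : EuclideanSpace ℂ (Fin n) → ℝ) : Prop :=
  ∀ z w : EuclideanSpace ℂ (Fin n),
    (∑ j, ∑ k, d2 j k f z * w j * (starRingEnd ℂ) (w k)).im = 0 ∧
    0 ≤ (∑ j, ∑ k, d2 j k f z * w j * (starRingEnd ℂ) (w k)).re

/-- A function on ℂⁿ is circular-symmetric if `f(e^{iθ} w) = f(w)` for all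
`θ ∈ [-π, π]` and all `w`. -/
def CircularSymmetric {α : Type*} (f : EuclideanSpace ℂ (Fin n) → α) : Prop :=
  ∀ θ ∈ Set.Icc (-π) π, ∀ w : EuclideanSpace ℂ (Fin n),
    f (Complex.exp (θ * Complex.I) • w) = f w

/-- The standard complex Gaussian measure `dγ(w) = π^{-n} e^{-|w|²} dℓ(w)` on ℂⁿ. -/
def gaussC (n : ℕ) : Measure (EuclideanSpace ℂ (Fin n)) :=
  volume.withDensity (fun w => ENNReal.ofReal ((π ^ n)⁻¹ * Real.exp (-‖w‖ ^ 2)))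

/-- The Mehler (Ornstein–Uhlenbeck) semigroup
`P_t f (w) = ∫ f(e^{-t/2} w + √(1 - e^{-t}) u) dγ(u)`. -/
def mehler (t : ℝ) (f : EuclideanSpace ℂ (Fin n) → ℝ)
    (w : EuclideanSpace ℂ (Fin n)) : ℝ :=
  ∫ u, f (Real.exp (-t / 2) • w + Real.sqrt (1 - Real.exp (-t)) • u) ∂(gaussC n)


/-! ### Auxiliary lemmas -/

section Aux

lemma single_eq_smul' (j : Fin n) (a : ℂ) :
    (EuclideanSpace.single j a : EuclideanSpace ℂ (Fin n)) = a • EuclideanSpace.single j 1 := by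
  ext k
  simp [EuclideanSpace.single_apply]

lemma smul_single' (j : Fin n) (c a : ℂ) :
    c • (EuclideanSpace.single j a : EuclideanSpace ℂ (Fin n)) = EuclideanSpace.single j (c * a) := by
  rw [single_eq_smul' j a, smul_smul, ← single_eq_smul']

lemma real_smul_eq' (r : ℝ) (v : EuclideanSpace ℂ (Fin n)) : r • v = (r : ℂ) • v := by
  ext k; simp [Complex.real_smul]

lemma single_decomp' (j : Fin n) (a : ℂ) :
    (EuclideanSpace.single j a : EuclideanSpace ℂ (Fin n))
      = a.re • EuclideanSpace.single j 1 + a.im • EuclideanSpace.single j Complex.I := by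
  rw [real_smul_eq', real_smul_eq', smul_single', smul_single']
  ext k
  simp [EuclideanSpace.single_apply]
  split
  · simp [Complex.ext_iff]
  · simp

lemma sum_single' (v : EuclideanSpace ℂ (Fin n)) :
    ∑ j, (EuclideanSpace.single j (v j) : EuclideanSpace ℂ (Fin n)) = v := by
  have h := (EuclideanSpace.basisFun (Fin n) ℂ).sum_repr v
  simp only [EuclideanSpace.basisFun_apply] at h
  calc ∑ j, (EuclideanSpace.single j (v j) : EuclideanSpace ℂ (Fin n))
      = ∑ j, (v j) • EuclideanSpace.single j 1 := by
        refine Finset.sum_congr rfl fun j _ => ?_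
        rw [smul_single', mul_one]
    _ = v := by
        conv_rhs => rw [← h]
        exact Finset.sum_congr rfl fun j _ => by rw [EuclideanSpace.basisFun_repr]

/-- Decomposition of a directional derivative along `single j a`. -/
lemma fderiv_single' (g : EuclideanSpace ℂ (Fin n) → ℂ) (z : EuclideanSpace ℂ (Fin n))
    (j : Fin n) (a : ℂ) :
    fderiv ℝ g z (EuclideanSpace.single j a)
      = (a.re : ℂ) * dx j g z + (a.im : ℂ) * dy j g z := by
  rw [single_decomp' j a, map_add, _root_.map_smul, _root_.map_smul, dx, dy,
    Complex.real_smul, Complex.real_smul]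

/-- Chain rule with complex scalar multiplication. -/
lemma fderiv_comp_smul' (g : EuclideanSpace ℂ (Fin n) → ℂ) (c : ℂ)
    (z : EuclideanSpace ℂ (Fin n)) (hg : DifferentiableAt ℝ g (c • z))
    (v : EuclideanSpace ℂ (Fin n)) :
    fderiv ℝ (fun z => g (c • z)) z v = fderiv ℝ g (c • z) (c • v) := by
  set L : EuclideanSpace ℂ (Fin n) →L[ℝ] EuclideanSpace ℂ (Fin n) :=
    (c • ContinuousLinearMap.id ℂ (EuclideanSpace ℂ (Fin n))).restrictScalars ℝ with hLdef
  have hg2 : HasFDerivAt g (fderiv ℝ g (L z)) (L z) :=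
    (show DifferentiableAt ℝ g (L z) from hg).hasFDerivAt
  have h3 : HasFDerivAt (fun z => g (c • z)) ((fderiv ℝ g (L z)).comp L) z :=
    HasFDerivAt.comp z hg2 L.hasFDerivAt
  rw [h3.fderiv]
  simp [hLdef]

lemma dx_comp_smul (g : EuclideanSpace ℂ (Fin n) → ℂ) (c : ℂ) (j : Fin n)
    (z : EuclideanSpace ℂ (Fin n)) (hg : DifferentiableAt ℝ g (c • z)) :
    dx j (fun z => g (c • z)) z = (c.re : ℂ) * dx j g (c • z) + (c.im : ℂ) * dy j g (c • z) := by
  rw [dx, fderiv_comp_smul' g c z hg, smul_single', mul_one, fderiv_single']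

lemma dy_comp_smul (g : EuclideanSpace ℂ (Fin n) → ℂ) (c : ℂ) (j : Fin n)
    (z : EuclideanSpace ℂ (Fin n)) (hg : DifferentiableAt ℝ g (c • z)) :
    dy j (fun z => g (c • z)) z
      = -(c.im : ℂ) * dx j g (c • z) + (c.re : ℂ) * dy j g (c • z) := by
  rw [dy, fderiv_comp_smul' g c z hg, smul_single', fderiv_single']
  simp

lemma dz_comp_smul (g : EuclideanSpace ℂ (Fin n) → ℂ) (c : ℂ) (j : Fin n)
    (z : EuclideanSpace ℂ (Fin n)) (hg : DifferentiableAt ℝ g (c • z)) :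
    dz j (fun z => g (c • z)) z = c * dz j g (c • z) := by
  simp only [dz, dx_comp_smul g c j z hg, dy_comp_smul g c j z hg]
  have hc : c = (c.re : ℂ) + (c.im : ℂ) * Complex.I := (Complex.re_add_im c).symm
  linear_combination (-(1/2 : ℂ) * (dx j g (c • z) - Complex.I * dy j g (c • z))) * hc
    + ((1/2 : ℂ) * (c.im : ℂ) * dy j g (c • z)) * Complex.I_sq

lemma dzbar_comp_smul (g : EuclideanSpace ℂ (Fin n) → ℂ) (c : ℂ) (j : Fin n)
    (z : EuclideanSpace ℂ (Fin n)) (hg : DifferentiableAt ℝ g (c • z)) :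
    dzbar j (fun z => g (c • z)) z = (starRingEnd ℂ) c * dzbar j g (c • z) := by
  simp only [dzbar, dx_comp_smul g c j z hg, dy_comp_smul g c j z hg]
  have hc : (starRingEnd ℂ) c = (c.re : ℂ) - (c.im : ℂ) * Complex.I := by
    simp [Complex.ext_iff]
  linear_combination (-(1/2 : ℂ) * (dx j g (c • z) + Complex.I * dy j g (c • z))) * hc
    + ((1/2 : ℂ) * (c.im : ℂ) * dy j g (c • z)) * Complex.I_sq

lemma dz_const_mul (a : ℂ) (g : EuclideanSpace ℂ (Fin n) → ℂ) (j : Fin n)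
    (z : EuclideanSpace ℂ (Fin n)) (hg : DifferentiableAt ℝ g z) :
    dz j (fun z => a * g z) z = a * dz j g z := by
  simp only [dz, dx, dy, fderiv_const_mul hg a]
  simp only [ContinuousLinearMap.smul_apply, smul_eq_mul]
  ring

/-- Smoothness of directional derivatives. -/
lemma contDiff_dir (g : EuclideanSpace ℂ (Fin n) → ℂ) (hg : ContDiff ℝ (⊤ : ℕ∞) g)
    (v : EuclideanSpace ℂ (Fin n)) :
    ContDiff ℝ (⊤ : ℕ∞) (fun z => fderiv ℝ g z v) :=
  (hg.fderiv_right (by simp)).clm_apply contDiff_const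

lemma contDiff_dx (g : EuclideanSpace ℂ (Fin n) → ℂ) (hg : ContDiff ℝ (⊤ : ℕ∞) g) (j : Fin n) :
    ContDiff ℝ (⊤ : ℕ∞) (dx j g) := contDiff_dir g hg _

lemma contDiff_dy (g : EuclideanSpace ℂ (Fin n) → ℂ) (hg : ContDiff ℝ (⊤ : ℕ∞) g) (j : Fin n) :
    ContDiff ℝ (⊤ : ℕ∞) (dy j g) := contDiff_dir g hg _

lemma contDiff_dz (g : EuclideanSpace ℂ (Fin n) → ℂ) (hg : ContDiff ℝ (⊤ : ℕ∞) g) (j : Fin n) :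
    ContDiff ℝ (⊤ : ℕ∞) (dz j g) :=
  contDiff_const.mul ((contDiff_dx g hg j).sub (contDiff_const.mul (contDiff_dy g hg j)))

lemma contDiff_dzbar (g : EuclideanSpace ℂ (Fin n) → ℂ) (hg : ContDiff ℝ (⊤ : ℕ∞) g) (j : Fin n) :
    ContDiff ℝ (⊤ : ℕ∞) (dzbar j g) :=
  contDiff_const.mul ((contDiff_dx g hg j).add (contDiff_const.mul (contDiff_dy g hg j)))

lemma contDiff_coord (j : Fin n) :
    ContDiff ℝ (⊤ : ℕ∞) (fun z : EuclideanSpace ℂ (Fin n) => z j) :=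
  (ContinuousLinearMap.contDiff
    ((EuclideanSpace.proj j : EuclideanSpace ℂ (Fin n) →L[ℂ] ℂ).restrictScalars ℝ))

lemma contDiff_OUc (g : EuclideanSpace ℂ (Fin n) → ℂ) (hg : ContDiff ℝ (⊤ : ℕ∞) g) :
    ContDiff ℝ (⊤ : ℕ∞) (OUc g) := by
  have : OUc g = fun z => ∑ j, (dz j (dzbar j g) z - (starRingEnd ℂ) (z j) * dzbar j g z) := rfl
  rw [this]
  refine ContDiff.sum fun j _ => ?_
  refine ContDiff.sub (contDiff_dz _ (contDiff_dzbar g hg j) j) ?_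
  exact (Complex.conjCLE.contDiff.comp (contDiff_coord j)).mul (contDiff_dzbar g hg j)

/-- The rotational derivative of a circular-symmetric function vanishes. -/
lemma fderiv_rot_zero (g : EuclideanSpace ℂ (Fin n) → ℂ)
    (hsym : CircularSymmetric g) (w : EuclideanSpace ℂ (Fin n))
    (hg : DifferentiableAt ℝ g w) :
    fderiv ℝ g w (Complex.I • w) = 0 := by
  set γ : ℝ → EuclideanSpace ℂ (Fin n) := fun θ => Complex.exp (θ * Complex.I) • w with hγ
  have hγ0 : γ 0 = w := by simp [hγ]
  have hd1 : HasDerivAt (fun θ : ℝ => (θ : ℂ) * Complex.I) Complex.I 0 := by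
    simpa using (hasDerivAt_id (0:ℝ)).ofReal_comp.mul_const Complex.I
  have hd2 : HasDerivAt (fun θ : ℝ => Complex.exp ((θ : ℂ) * Complex.I)) Complex.I 0 := by
    simpa using hd1.cexp
  have hd3 : HasDerivAt γ (Complex.I • w) 0 := by
    simpa [hγ] using hd2.smul_const w
  have hcomp : HasDerivAt (fun θ => g (γ θ)) (fderiv ℝ g w (Complex.I • w)) 0 := by
    have := (hg.hasFDerivAt).comp_hasDerivAt_of_eq 0 hd3 hγ0.symm
    exact this
  have hconst : (fun θ => g (γ θ)) =ᶠ[nhds (0:ℝ)] fun _ => g w := by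
    have hmem : Set.Icc (-π) π ∈ nhds (0:ℝ) :=
      Icc_mem_nhds (by simpa using Real.pi_pos) Real.pi_pos
    filter_upwards [hmem] with θ hθ
    exact hsym θ hθ w
  have hzero : HasDerivAt (fun θ => g (γ θ)) 0 0 :=
    (hasDerivAt_const (0:ℝ) (g w)).congr_of_eventuallyEq hconst
  exact hcomp.unique hzero

/-- The radial rotation operator annihilates circular-symmetric functions. -/
lemma R_zero (g : EuclideanSpace ℂ (Fin n) → ℂ)
    (hsym : CircularSymmetric g) (w : EuclideanSpace ℂ (Fin n))
    (hg : DifferentiableAt ℝ g w) :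
    ∑ j, (w j * dz j g w - (starRingEnd ℂ) (w j) * dzbar j g w) = 0 := by
  have key : ∀ j : Fin n, w j * dz j g w - (starRingEnd ℂ) (w j) * dzbar j g w
      = -Complex.I * fderiv ℝ g w (EuclideanSpace.single j (Complex.I * w j)) := by
    intro j
    rw [fderiv_single']
    have h1 : ((Complex.I * w j).re : ℂ) = -((w j).im : ℂ) := by
      simp
    have h2 : ((Complex.I * w j).im : ℂ) = ((w j).re : ℂ) := by
      simp
    rw [h1, h2]
    have hw : w j = ((w j).re : ℂ) + ((w j).im : ℂ) * Complex.I := (Complex.re_add_im _).symm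
    have hwc : (starRingEnd ℂ) (w j) = ((w j).re : ℂ) - ((w j).im : ℂ) * Complex.I := by
      simp [Complex.ext_iff]
    simp only [dz, dzbar]
    linear_combination ((1/2 : ℂ) * (dx j g w - Complex.I * dy j g w)) * hw
      + (-(1/2 : ℂ) * (dx j g w + Complex.I * dy j g w)) * hwc
  rw [Finset.sum_congr rfl fun j _ => key j, ← Finset.mul_sum, ← map_sum]
  have : ∑ j, (EuclideanSpace.single j (Complex.I * w j) : EuclideanSpace ℂ (Fin n))
      = Complex.I • w := by
    calc ∑ j, (EuclideanSpace.single j (Complex.I * w j) : EuclideanSpace ℂ (Fin n))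
        = ∑ j, Complex.I • (EuclideanSpace.single j (w j) : EuclideanSpace ℂ (Fin n)) := by
          refine Finset.sum_congr rfl fun j _ => ?_
          rw [smul_single']
      _ = Complex.I • ∑ j, (EuclideanSpace.single j (w j) : EuclideanSpace ℂ (Fin n)) := by
          rw [Finset.smul_sum]
      _ = Complex.I • w := by rw [sum_single']
  rw [this, fderiv_rot_zero g hsym w hg, mul_zero]

/-- `𝕃̄ g = 𝕃 g` for circular-symmetric differentiable `g`. -/
lemma OUcBar_eq_OUc (g : EuclideanSpace ℂ (Fin n) → ℂ)
    (hsym : CircularSymmetric g) (w : EuclideanSpace ℂ (Fin n))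
    (hg : DifferentiableAt ℝ g w) :
    OUcBar g w = OUc g w := by
  have h := R_zero g hsym w hg
  rw [OUcBar, OUc, ← sub_eq_zero, ← Finset.sum_sub_distrib]
  rw [← neg_eq_zero, ← Finset.sum_neg_distrib, ← h]
  exact Finset.sum_congr rfl fun j _ => by ring

/-- `𝕃` commutes with rotations. -/
lemma OUc_comp_smul (g : EuclideanSpace ℂ (Fin n) → ℂ) (hg : ContDiff ℝ (⊤ : ℕ∞) g)
    (c : ℂ) (hc : (starRingEnd ℂ) c * c = 1) (z : EuclideanSpace ℂ (Fin n)) :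
    OUc (fun z => g (c • z)) z = OUc g (c • z) := by
  rw [OUc, OUc]
  refine Finset.sum_congr rfl fun j _ => ?_
  have hdiff : ∀ x : EuclideanSpace ℂ (Fin n), DifferentiableAt ℝ g x :=
    fun x => (hg.differentiable (by simp)).differentiableAt
  have h1 : dzbar j (fun z => g (c • z))
      = fun z => (starRingEnd ℂ) c * dzbar j g (c • z) :=
    funext fun z => dzbar_comp_smul g c j z (hdiff _)
  have hdzbar : ContDiff ℝ (⊤ : ℕ∞) (dzbar j g) := contDiff_dzbar g hg j
  have hsmul : ContDiff ℝ (⊤ : ℕ∞) (fun z : EuclideanSpace ℂ (Fin n) => c • z) :=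
    ContinuousLinearMap.contDiff
      ((c • ContinuousLinearMap.id ℂ (EuclideanSpace ℂ (Fin n))).restrictScalars ℝ)
  have hdiff2 : DifferentiableAt ℝ (fun z : EuclideanSpace ℂ (Fin n) => dzbar j g (c • z)) z :=
    ((hdzbar.comp hsmul).differentiable (by simp)).differentiableAt
  have h2 : dz j (dzbar j (fun z => g (c • z))) z
      = dz j (dzbar j g) (c • z) := by
    rw [h1, dz_const_mul _ _ j z hdiff2,
      dz_comp_smul (dzbar j g) c j z ((hdzbar.differentiable (by simp)).differentiableAt)]
    rw [← mul_assoc, hc, one_mul]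
  rw [h2, dzbar_comp_smul g c j z (hdiff _)]
  have h3 : (c • z) j = c * z j := rfl
  rw [h3, map_mul]
  ring

end Aux

/-- **Second-order identity for circular-symmetric functions**: `𝕃²f = 𝕃̄²f = 𝕃̄(𝕃f)`. -/
theorem OUc_sq_eq_OUcBar_sq_of_circularSymmetric (n : ℕ)
    (f : EuclideanSpace ℂ (Fin n) → ℝ)
    (hf : ContDiff ℝ (⊤ : ℕ∞) f) (hsym : CircularSymmetric f)
    (w : EuclideanSpace ℂ (Fin n)) :
    OUc (OUc (fun z => (f z : ℂ))) w = OUcBar (OUcBar (fun z => (f z : ℂ))) w ∧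
    OUc (OUc (fun z => (f z : ℂ))) w = OUcBar (OUc (fun z => (f z : ℂ))) w := by
  set F : EuclideanSpace ℂ (Fin n) → ℂ := fun z => (f z : ℂ) with hFdef
  have hFc : ContDiff ℝ (⊤ : ℕ∞) F := Complex.ofRealCLM.contDiff.comp hf
  have hFs : CircularSymmetric F := by
    intro θ hθ z
    simp only [hFdef]
    rw [hsym θ hθ z]
  have hG : ContDiff ℝ (⊤ : ℕ∞) (OUc F) := contDiff_OUc F hFc
  have hGs : CircularSymmetric (OUc F) := by
    intro θ hθ z
    set c : ℂ := Complex.exp (θ * Complex.I) with hcdef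
    have hc : (starRingEnd ℂ) c * c = 1 := by
      rw [hcdef, ← Complex.exp_conj]
      rw [← Complex.exp_add]
      simp [Complex.ext_iff]
    have := OUc_comp_smul F hFc c hc z
    have hFun : (fun z => F (c • z)) = F := funext fun z => hFs θ hθ z
    rw [hFun] at this
    exact this.symm
  have e1 : OUcBar F = OUc F := funext fun z =>
    OUcBar_eq_OUc F hFs z ((hFc.differentiable (by simp)).differentiableAt)
  have e2 : OUcBar (OUc F) w = OUc (OUc F) w :=
    OUcBar_eq_OUc (OUc F) hGs w ((hG.differentiable (by simp)).differentiableAt)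
  exact ⟨by rw [e1]; exact e2.symm, e2.symm⟩

end
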